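/- Let γ > 0 and let (H_k)_{k∈ℤ} be linear subspaces of ℝ^d with linear maps A_k : H_k → H_{k+1} such that the sequence 𝒜 = (A_k) has property (C) with constants N > 1 and λ ∈ (0,1), with projections P_k, Q_k and maps B_k as in the definition. Define, for a sequence z = (z_k)_{k∈ℤ} with z_k ∈ H_k and ‖z‖_γ < ∞, the sequence G(z) by (G(z))_k = Σ_{u=−∞}^{k} A_{k−1}⋯A_u P_u z_u − Σ_{u=k+1}^{∞} B_k⋯B_{u−1} Q_u z_u (where the term u = k in the first sum is P_k z_k). Then both series converge absolutely for every k, G(z) ∈ N_γ(ℤ), and there exists a constant C > 0, depending only on N, λ, γ, such that ‖G(z)‖_γ ≤ C‖z‖_γ; that is, G is a bounded linear operator from N_γ(ℤ) to N_γ(ℤ). -/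

import Mathlib

noncomputable section

open Filter Topology

/-- `ℝ^d`. -/
abbrev Ed (d : ℕ) := EuclideanSpace ℝ (Fin d)

/-- The weight `(|k| + 1) ^ γ`. -/
noncomputable def wt (γ : ℝ) (k : ℤ) : ℝ := (|(k : ℝ)| + 1) ^ γ

/-- `fwdProd A u n = A (u+n-1) ∘ … ∘ A u` (forward composition of `n` factors). -/
noncomputable def fwdProd {d : ℕ} (A : ℤ → (Ed d →L[ℝ] Ed d)) (u : ℤ) :
    ℕ → (Ed d →L[ℝ] Ed d)
  | 0 => 1
  | n + 1 => (A (u + n)).comp (fwdProd A u n)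

/-- `bwdProd B k n = B k ∘ B (k+1) ∘ … ∘ B (k+n-1)` (backward composition of `n` factors). -/
noncomputable def bwdProd {d : ℕ} (B : ℤ → (Ed d →L[ℝ] Ed d)) (k : ℤ) :
    ℕ → (Ed d →L[ℝ] Ed d)
  | 0 => 1
  | n + 1 => (bwdProd B k n).comp (B (k + n))


/-!
Along the stable directions the products `A_{k-1} ⋯ A_u` contract like `λ^(k-u)`, along the
unstable ones the products `B_k ⋯ B_{u-1}` like `λ^(u-k)`, and `P`, `Q` cost at most a factor `N`.
The weight is submultiplicative, `(|k|+1)^γ ≤ (|u|+1)^γ (|k-u|+1)^γ`, so the `u`-th term of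
either series, multiplied by `(|k|+1)^γ`, is at most `N ‖z‖_γ (|k-u|+1)^γ λ^|k-u|` up to a shift
by one. Polynomial growth against geometric decay makes `∑ₙ (n+2)^γ λ^n` finite, which gives
`C = 2 N ∑ₙ (n+2)^γ λ^n`.
-/

section Weight

variable {γ : ℝ}

lemma wt_pos (γ : ℝ) (k : ℤ) : 0 < wt γ k := by
  unfold wt
  positivity

lemma wt_le_wt_of_abs_le (hγ : 0 ≤ γ) {i j : ℤ} (h : |i| ≤ |j|) : wt γ i ≤ wt γ j := by
  unfold wt
  gcongr (?_ + 1) ^ γ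
  exact_mod_cast h

lemma wt_le_wt_mul_wt_sub (hγ : 0 ≤ γ) (k j : ℤ) : wt γ k ≤ wt γ j * wt γ (k - j) := by
  unfold wt
  rw [← Real.mul_rpow (by positivity) (by positivity)]
  gcongr
  have htri : |(k : ℝ)| ≤ |(j : ℝ)| + |((k - j : ℤ) : ℝ)| := by
    push_cast
    simpa using abs_add_le (j : ℝ) (k - j)
  nlinarith [abs_nonneg (j : ℝ), abs_nonneg ((k - j : ℤ) : ℝ)]

lemma wt_le_wt_mul_wt_of_abs_sub_le (hγ : 0 ≤ γ) {k j : ℤ} {n : ℕ} (h : |k - j| ≤ n + 1) :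
    wt γ k ≤ wt γ j * wt γ (n + 1) :=
  (wt_le_wt_mul_wt_sub hγ k j).trans <| mul_le_mul_of_nonneg_left
    (wt_le_wt_of_abs_le hγ (h.trans (le_abs_self _))) (wt_pos γ j).le

lemma summable_wt_succ_mul_geometric {r : ℝ} (hr0 : 0 < r) (hr1 : r < 1) :
    Summable fun n : ℕ => wt γ (n + 1) * r ^ n := by
  set m := ⌈γ⌉₊
  have hpoly : Summable fun n : ℕ => ((n + 2 : ℕ) : ℝ) ^ m * r ^ (n + 2) :=
    (summable_nat_add_iff (f := fun n : ℕ => (n : ℝ) ^ m * r ^ n) 2).mpr <|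
      summable_pow_mul_geometric_of_norm_lt_one m (by rwa [Real.norm_of_nonneg hr0.le])
  refine (hpoly.div_const (r ^ 2)).of_nonneg_of_le
    (fun n => mul_nonneg (wt_pos _ _).le (pow_nonneg hr0.le n)) fun n => ?_
  have hwt : wt γ (n + 1) = ((n : ℝ) + 2) ^ γ := by
    unfold wt
    push_cast
    rw [abs_of_nonneg (by positivity)]
    ring_nf
  calc wt γ (n + 1) * r ^ n ≤ ((n : ℝ) + 2) ^ (m : ℝ) * r ^ n := by
        rw [hwt]
        gcongr
        · linarith [n.cast_nonneg (α := ℝ)]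
        · exact Nat.le_ceil γ
    _ = ((n + 2 : ℕ) : ℝ) ^ m * r ^ (n + 2) / r ^ 2 := by
        rw [Real.rpow_natCast]
        field_simp
        push_cast
        ring

end Weight

section Products

variable {d : ℕ} {lam : ℝ}

lemma fwdProd_apply_mem_and_norm_le (S : ℤ → Submodule ℝ (Ed d)) (A : ℤ → (Ed d →L[ℝ] Ed d))
    (hlam : 0 ≤ lam) (hA : ∀ k : ℤ, ∀ v ∈ S k, A k v ∈ S (k + 1) ∧ ‖A k v‖ ≤ lam * ‖v‖)
    {u : ℤ} {v : Ed d} (hv : v ∈ S u) (n : ℕ) :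
    fwdProd A u n v ∈ S (u + n) ∧ ‖fwdProd A u n v‖ ≤ lam ^ n * ‖v‖ := by
  induction n with
  | zero => simpa [fwdProd] using hv
  | succ n ih =>
    obtain ⟨hmem, hnorm⟩ := hA (u + n) _ ih.1
    refine ⟨by simpa [fwdProd, add_assoc] using hmem, ?_⟩
    calc ‖fwdProd A u (n + 1) v‖ ≤ lam * ‖fwdProd A u n v‖ := hnorm
      _ ≤ lam * (lam ^ n * ‖v‖) := by gcongr; exact ih.2
      _ = lam ^ (n + 1) * ‖v‖ := by ring

lemma bwdProd_apply_mem_and_norm_le (U : ℤ → Submodule ℝ (Ed d)) (B : ℤ → (Ed d →L[ℝ] Ed d))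
    (hlam : 0 ≤ lam) (hB : ∀ k : ℤ, ∀ v ∈ U (k + 1), B k v ∈ U k ∧ ‖B k v‖ ≤ lam * ‖v‖)
    (k : ℤ) (n : ℕ) {v : Ed d} (hv : v ∈ U (k + n)) :
    bwdProd B k n v ∈ U k ∧ ‖bwdProd B k n v‖ ≤ lam ^ n * ‖v‖ := by
  induction n generalizing v with
  | zero => simpa [bwdProd] using hv
  | succ n ih =>
    obtain ⟨hmem, hnorm⟩ := hB (k + n) v (by simpa [add_assoc] using hv)
    obtain ⟨ihmem, ihnorm⟩ := ih hmem
    refine ⟨ihmem, ?_⟩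
    calc ‖bwdProd B k (n + 1) v‖ ≤ lam ^ n * ‖B (k + n) v‖ := ihnorm
      _ ≤ lam ^ n * (lam * ‖v‖) := by gcongr
      _ = lam ^ (n + 1) * ‖v‖ := by ring

lemma norm_fwdProd_apply_proj_le {N : ℝ} (H S : ℤ → Submodule ℝ (Ed d))
    (A P : ℤ → (Ed d →L[ℝ] Ed d)) (hlam : 0 ≤ lam)
    (hA : ∀ k : ℤ, ∀ v ∈ S k, A k v ∈ S (k + 1) ∧ ‖A k v‖ ≤ lam * ‖v‖)
    (hP : ∀ k : ℤ, ∀ v ∈ H k, P k v ∈ S k ∧ ‖P k v‖ ≤ N * ‖v‖)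
    {u : ℤ} {v : Ed d} (hv : v ∈ H u) (n : ℕ) :
    ‖fwdProd A u n (P u v)‖ ≤ N * lam ^ n * ‖v‖ := by
  obtain ⟨hmem, hnorm⟩ := hP u v hv
  calc _ ≤ lam ^ n * ‖P u v‖ := (fwdProd_apply_mem_and_norm_le S A hlam hA hmem n).2
    _ ≤ lam ^ n * (N * ‖v‖) := by gcongr
    _ = N * lam ^ n * ‖v‖ := by ring

lemma norm_bwdProd_succ_apply_proj_le {N : ℝ} (H U : ℤ → Submodule ℝ (Ed d))
    (B Q : ℤ → (Ed d →L[ℝ] Ed d)) (hlam0 : 0 ≤ lam) (hlam1 : lam ≤ 1)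
    (hB : ∀ k : ℤ, ∀ v ∈ U (k + 1), B k v ∈ U k ∧ ‖B k v‖ ≤ lam * ‖v‖)
    (hQ : ∀ k : ℤ, ∀ v ∈ H k, Q k v ∈ U k ∧ ‖Q k v‖ ≤ N * ‖v‖)
    (k : ℤ) (n : ℕ) {v : Ed d} (hv : v ∈ H (k + 1 + n)) :
    ‖bwdProd B k (n + 1) (Q (k + 1 + n) v)‖ ≤ N * lam ^ n * ‖v‖ := by
  obtain ⟨hmem, hnorm⟩ := hQ _ v hv
  have hmem' : Q (k + 1 + n) v ∈ U (k + (n + 1 : ℕ)) := by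
    push_cast
    rwa [← add_assoc, add_right_comm]
  calc _ ≤ lam ^ (n + 1) * ‖Q (k + 1 + n) v‖ :=
        (bwdProd_apply_mem_and_norm_le U B hlam0 hB k (n + 1) hmem').2
    _ ≤ lam ^ n * (N * ‖v‖) :=
        mul_le_mul (pow_le_pow_of_le_one hlam0 hlam1 n.le_succ) hnorm (norm_nonneg _)
          (by positivity)
    _ = N * lam ^ n * ‖v‖ := by ring

end Products

section Series

variable {E : Type*} [SeminormedAddCommGroup E]

lemma norm_mul_wt_le {γ c r Cz : ℝ} (hγ : 0 ≤ γ) (hc : 0 ≤ c) (hr : 0 ≤ r) {x y : E}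
    {k j : ℤ} {n : ℕ} (hkj : |k - j| ≤ n + 1) (hy : ‖y‖ * wt γ j ≤ Cz)
    (hx : ‖x‖ ≤ c * r ^ n * ‖y‖) :
    ‖x‖ * wt γ k ≤ c * Cz * (wt γ (n + 1) * r ^ n) := by
  have hcr : 0 ≤ c * r ^ n * wt γ (n + 1) := by positivity [(wt_pos γ (n + 1)).le]
  calc ‖x‖ * wt γ k ≤ c * r ^ n * ‖y‖ * (wt γ j * wt γ (n + 1)) :=
        mul_le_mul hx (wt_le_wt_mul_wt_of_abs_sub_le hγ hkj) (wt_pos γ k).le (by positivity)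
    _ = c * r ^ n * wt γ (n + 1) * (‖y‖ * wt γ j) := by ring
    _ ≤ c * r ^ n * wt γ (n + 1) * Cz := mul_le_mul_of_nonneg_left hy hcr
    _ = c * Cz * (wt γ (n + 1) * r ^ n) := by ring

lemma summable_norm_and_norm_tsum_mul_le {x : ℕ → E} {b : ℕ → ℝ} {w : ℝ} (hw : 0 < w)
    (hb : Summable b) (hx : ∀ n, ‖x n‖ * w ≤ b n) :
    (Summable fun n => ‖x n‖) ∧ ‖∑' n, x n‖ * w ≤ ∑' n, b n := by
  have hsum : Summable fun n => ‖x n‖ :=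
    (hb.div_const w).of_nonneg_of_le (fun n => norm_nonneg _)
      fun n => (le_div_iff₀ hw).mpr (hx n)
  refine ⟨hsum, ?_⟩
  calc ‖∑' n, x n‖ * w ≤ (∑' n, ‖x n‖) * w :=
        mul_le_mul_of_nonneg_right (norm_tsum_le_tsum_norm hsum) hw.le
    _ = ∑' n, ‖x n‖ * w := (tsum_mul_right).symm
    _ ≤ ∑' n, b n := (hsum.mul_right w).tsum_le_tsum hx hb

lemma summable_norm_and_norm_tsum_mul_wt_le {γ c r Cz : ℝ} (hγ : 0 ≤ γ) (hc : 0 ≤ c)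
    (hr0 : 0 < r) (hr1 : r < 1) {z : ℤ → E} (hz : ∀ j, ‖z j‖ * wt γ j ≤ Cz)
    {k : ℤ} {x : ℕ → E} {u : ℕ → ℤ} (hu : ∀ n, |k - u n| ≤ n + 1)
    (hx : ∀ n, ‖x n‖ ≤ c * r ^ n * ‖z (u n)‖) :
    (Summable fun n => ‖x n‖) ∧
      ‖∑' n, x n‖ * wt γ k ≤ c * Cz * ∑' n : ℕ, wt γ (n + 1) * r ^ n := by
  rw [← tsum_mul_left]
  exact summable_norm_and_norm_tsum_mul_le (wt_pos γ k)
    ((summable_wt_succ_mul_geometric hr0 hr1).mul_left _)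
    fun n => norm_mul_wt_le hγ hc hr0.le (hu n) (hz (u n)) (hx n)

end Series

/-- the operator `G` is a bounded operator from `N_γ(ℤ)` to `N_γ(ℤ)`,
with a bound depending only on `N`, `λ` and `γ`. -/
theorem G_bounded (γ N lam : ℝ) (hγ : 0 < γ) (hN : 1 < N) (hlam0 : 0 < lam) (hlam1 : lam < 1) :
    ∃ C : ℝ, 0 < C ∧
      ∀ (d : ℕ) (H S U : ℤ → Submodule ℝ (Ed d)) (A P Q B : ℤ → (Ed d →L[ℝ] Ed d)),
        (∀ k : ℤ, ∀ v ∈ H k, A k v ∈ H (k + 1)) →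
        (∀ k : ℤ, S k ≤ H k) → (∀ k : ℤ, U k ≤ H k) →
        (∀ k : ℤ, ∀ v ∈ H k, P k v + Q k v = v ∧ P k v ∈ S k ∧ Q k v ∈ U k ∧
          ‖P k v‖ ≤ N * ‖v‖ ∧ ‖Q k v‖ ≤ N * ‖v‖) →
        (∀ k : ℤ, ∀ v ∈ S k, P k v = v) → (∀ k : ℤ, ∀ v ∈ U k, Q k v = v) →
        (∀ k : ℤ, ∀ v ∈ S k, A k v ∈ S (k + 1) ∧ ‖A k v‖ ≤ lam * ‖v‖) →
        (∀ k : ℤ, ∀ v ∈ U (k + 1), B k v ∈ U k ∧ ‖B k v‖ ≤ lam * ‖v‖ ∧ A k (B k v) = v) →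
        ∀ (z : ℤ → Ed d), (∀ k : ℤ, z k ∈ H k) →
          ∀ Cz : ℝ, (∀ k : ℤ, ‖z k‖ * wt γ k ≤ Cz) →
            (∀ k : ℤ, Summable fun n : ℕ =>
              ‖(fwdProd A (k - n) n) (P (k - n) (z (k - n)))‖) ∧
            (∀ k : ℤ, Summable fun n : ℕ =>
              ‖(bwdProd B k (n + 1)) (Q (k + 1 + n) (z (k + 1 + n)))‖) ∧
            ∀ k : ℤ,
              ‖(∑' n : ℕ, (fwdProd A (k - n) n) (P (k - n) (z (k - n)))) -
                  ∑' n : ℕ, (bwdProd B k (n + 1)) (Q (k + 1 + n) (z (k + 1 + n)))‖ * wt γ k ≤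
                C * Cz := by
  have hgeom := summable_wt_succ_mul_geometric (γ := γ) hlam0 hlam1
  set Sg := ∑' n : ℕ, wt γ (n + 1) * lam ^ n
  have hSg : 0 < Sg := hgeom.tsum_pos (fun n => by positivity [(wt_pos γ (n + 1)).le]) 0
    (by simpa using wt_pos γ 1)
  refine ⟨2 * N * Sg, by positivity, ?_⟩
  intro d H S U A P Q B _ _ _ hPQ _ _ hA hB z hz Cz hzC
  have hN0 : 0 ≤ N := by linarith
  have hP k v hv : P k v ∈ S k ∧ ‖P k v‖ ≤ N * ‖v‖ := ⟨(hPQ k v hv).2.1, (hPQ k v hv).2.2.2.1⟩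
  have hQ k v hv : Q k v ∈ U k ∧ ‖Q k v‖ ≤ N * ‖v‖ := ⟨(hPQ k v hv).2.2.1, (hPQ k v hv).2.2.2.2⟩
  have hB' k v hv : B k v ∈ U k ∧ ‖B k v‖ ≤ lam * ‖v‖ := ⟨(hB k v hv).1, (hB k v hv).2.1⟩
  have hfwd (k : ℤ) := summable_norm_and_norm_tsum_mul_wt_le hγ.le hN0 hlam0 hlam1 hzC
    (k := k) (u := fun n => k - n) (fun n => by rw [abs_le]; omega)
    fun n => norm_fwdProd_apply_proj_le H S A P hlam0.le hA hP (hz (k - n)) n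
  have hbwd (k : ℤ) := summable_norm_and_norm_tsum_mul_wt_le hγ.le hN0 hlam0 hlam1 hzC
    (k := k) (u := fun n => k + 1 + n) (fun n => by rw [abs_le]; omega)
    fun n => norm_bwdProd_succ_apply_proj_le H U B Q hlam0.le hlam1.le hB' hQ k n (hz (k + 1 + n))
  refine ⟨fun k => (hfwd k).1, fun k => (hbwd k).1, fun k => ?_⟩
  calc _ ≤ (‖∑' n : ℕ, (fwdProd A (k - n) n) (P (k - n) (z (k - n)))‖ +
        ‖∑' n : ℕ, (bwdProd B k (n + 1)) (Q (k + 1 + n) (z (k + 1 + n)))‖) * wt γ k :=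
        mul_le_mul_of_nonneg_right (norm_sub_le _ _) (wt_pos γ k).le
    _ ≤ N * Cz * Sg + N * Cz * Sg := by
        rw [add_mul]
        exact add_le_add (hfwd k).2 (hbwd k).2
    _ = 2 * N * Sg * Cz := by ring
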